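/- For every natural number N ≥ 1, as an identity of formal power series in q: the Fine-type evaluation F(-1/q, -q^N; q) = ((1+q^N)/(1-q^N)) ((-1;q)_N − 1), where F(a,b;t) = ∑_{n=0}^{∞} (aq;q)_n t^n/(bq;q)_n. -/

import Mathlib

open Finset

/-- q-Pochhammer symbol (a;q)_n = ∏_{k=0}^{n-1} (1 - a q^k). -/
noncomputable def qP (a q : ℂ) (n : ℕ) : ℂ := ∏ k ∈ Finset.range n, (1 - a * q ^ k)

/-- Gaussian (q-)binomial coefficient [N choose n]_q. -/
noncomputable def qBinom (q : ℂ) (N n : ℕ) : ℂ := qP q q N / (qP q q n * qP q q (N - n))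

/-- Fine's function F(a,b;t) = ∑_{n≥0} (aq;q)_n t^n / (bq;q)_n. -/
noncomputable def fine (q a b t : ℂ) : ℂ := ∑' n : ℕ, qP (a * q) q n * t ^ n / qP (b * q) q n

/-!
With `a = -1`, the `n`-th term of the series is `(a;q)_{N+1} q^n / (a q^n;q)_{N+1}`, and
`q^n / (a q^n;q)_{N+1} = ((a q^{n+1};q)_N⁻¹ - (a q^n;q)_N⁻¹) / (a (q^N - 1))`,
so the series telescopes. As `(a q^n;q)_N → 1`, its sum is
`(a;q)_{N+1} / (a (q^N - 1)) * (1 - (a;q)_N⁻¹)`.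
-/

open Filter Topology

theorem qP_add (a q : ℂ) (m n : ℕ) : qP a q (m + n) = qP a q m * qP (a * q ^ m) q n := by
  simp only [qP, prod_range_add, mul_assoc, ← pow_add]

theorem qP_succ (a q : ℂ) (n : ℕ) : qP a q (n + 1) = qP a q n * (1 - a * q ^ n) :=
  prod_range_succ _ n

theorem qP_succ' (a q : ℂ) (n : ℕ) : qP a q (n + 1) = (1 - a) * qP (a * q) q n := by
  rw [add_comm, qP_add]; simp [qP]

theorem qP_zero_left (q : ℂ) (n : ℕ) : qP 0 q n = 1 := by simp [qP]

theorem continuous_qP_left (q : ℂ) (n : ℕ) : Continuous fun a => qP a q n := by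
  unfold qP; fun_prop

theorem qP_ne_zero {a q : ℂ} (n : ℕ) (h : ∀ k, a * q ^ k ≠ 1) : qP a q n ≠ 0 :=
  prod_ne_zero_iff.2 fun k _ => sub_ne_zero.2 (h k).symm

theorem qP_mul_pow_ne_zero {a q : ℂ} (ha : ∀ k, a * q ^ k ≠ 1) (m n : ℕ) :
    qP (a * q ^ m) q n ≠ 0 :=
  qP_ne_zero n fun k => by rw [mul_assoc, ← pow_add]; exact ha _

theorem inv_qP_mul_sub_inv_qP {a q : ℂ} {N : ℕ} (h : qP a q (N + 1) ≠ 0) :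
    (qP (a * q) q N)⁻¹ - (qP a q N)⁻¹ = a * (q ^ N - 1) / qP a q (N + 1) := by
  have h₁ : qP (a * q) q N ≠ 0 := by rw [qP_succ'] at h; exact right_ne_zero_of_mul h
  have h₂ : qP a q N ≠ 0 := by rw [qP_succ] at h; exact left_ne_zero_of_mul h
  rw [inv_sub_inv h₁ h₂, div_eq_div_iff (mul_ne_zero h₁ h₂) h]
  have e₁ := qP_succ a q N
  have e₂ := qP_succ' a q N
  linear_combination qP a q N * e₂ - qP (a * q) q N * e₁

theorem tendsto_qP_mul_pow {q : ℂ} (hq : ‖q‖ < 1) (a : ℂ) (N : ℕ) :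
    Tendsto (fun n => qP (a * q ^ n) q N) atTop (𝓝 1) := by
  have h₀ : Tendsto (fun n => a * q ^ n) atTop (𝓝 0) := by
    simpa using (tendsto_pow_atTop_nhds_zero_of_norm_lt_one hq).const_mul a
  simpa [Function.comp_def, qP_zero_left] using ((continuous_qP_left q N).tendsto 0).comp h₀

theorem qP_mul_pow_div_qP_eq {a q : ℂ} {N : ℕ} (ha : ∀ k, a * q ^ k ≠ 1) (n : ℕ) :
    qP a q n * q ^ n / qP (a * q ^ (N + 1)) q n
      = qP a q (N + 1) * q ^ n * (qP (a * q ^ n) q (N + 1))⁻¹ := by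
  have key : qP a q n * qP (a * q ^ n) q (N + 1) = qP a q (N + 1) * qP (a * q ^ (N + 1)) q n := by
    rw [← qP_add, ← qP_add, add_comm]
  rw [eq_mul_inv_iff_mul_eq₀ (qP_mul_pow_ne_zero ha n (N + 1)), div_mul_eq_mul_div,
    div_eq_iff (qP_mul_pow_ne_zero ha (N + 1) n)]
  linear_combination q ^ n * key

theorem hasSum_qP_mul_pow_div_qP {a q : ℂ} {N : ℕ} (hq : ‖q‖ < 1) (ha : ∀ k, a * q ^ k ≠ 1)
    (ha₀ : a ≠ 0) (hqN : q ^ N ≠ 1) :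
    HasSum (fun n => qP a q n * q ^ n / qP (a * q ^ (N + 1)) q n)
      (qP a q (N + 1) / (a * (q ^ N - 1)) * (1 - (qP a q N)⁻¹)) := by
  set c := qP a q (N + 1) / (a * (q ^ N - 1))
  set g : ℕ → ℂ := fun n => (qP (a * q ^ n) q N)⁻¹
  have htel : ∀ n, qP a q n * q ^ n / qP (a * q ^ (N + 1)) q n = c * (g (n + 1) - g n) := by
    intro n
    have h := inv_qP_mul_sub_inv_qP (qP_mul_pow_ne_zero ha n (N + 1))
    rw [mul_assoc, ← pow_succ] at h
    rw [qP_mul_pow_div_qP_eq ha, h]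
    have hqN' : q ^ N - 1 ≠ 0 := sub_ne_zero.2 hqN
    simp only [c]
    field_simp
  have hg : Tendsto g atTop (𝓝 1) := by
    simpa using (tendsto_qP_mul_pow hq a N).inv₀ one_ne_zero
  have hsum : Summable fun n => qP a q n * q ^ n / qP (a * q ^ (N + 1)) q n := by
    simp only [qP_mul_pow_div_qP_eq ha]
    refine Summable.mul_tendsto_const (c := 1) ?_ ?_
    · simpa [norm_mul, norm_pow] using
        (summable_geometric_of_lt_one (norm_nonneg q) hq).mul_left ‖qP a q (N + 1)‖
    · rw [Nat.cofinite_eq_atTop]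
      simpa using (tendsto_qP_mul_pow hq a (N + 1)).inv₀ one_ne_zero
  refine hsum.hasSum_iff_tendsto_nat.2 ?_
  simp only [htel, ← mul_sum, sum_range_sub]
  simpa [g] using (hg.sub_const (g 0)).const_mul c

theorem norm_pow_lt_one {q : ℂ} (hq : ‖q‖ < 1) {k : ℕ} (hk : k ≠ 0) : ‖q ^ k‖ < 1 := by
  rw [norm_pow]
  exact pow_lt_one₀ (norm_nonneg q) hq hk

theorem neg_one_mul_pow_ne_one {q : ℂ} (hq : ‖q‖ < 1) (k : ℕ) : -1 * q ^ k ≠ 1 := by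
  intro h
  rcases eq_or_ne k 0 with rfl | hk
  · norm_num at h
  · have h' : ‖(-1 : ℂ) * q ^ k‖ = 1 := by rw [h, norm_one]
    rw [norm_mul, norm_neg, norm_one, one_mul] at h'
    exact (norm_pow_lt_one hq hk).ne h'

theorem stmt_10 (N : ℕ) (hN : 1 ≤ N) (q : ℂ) (hq : ‖q‖ < 1) (hq0 : q ≠ 0) :
    fine q (-1 / q) (-(q ^ N)) q = ((1 + q ^ N) / (1 - q ^ N)) * (qP (-1) q N - 1) := by
  have ha := neg_one_mul_pow_ne_one hq
  have hqN : q ^ N ≠ 1 := fun h =>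
    (norm_pow_lt_one hq (Nat.one_le_iff_ne_zero.mp hN)).ne (by rw [h, norm_one])
  have hsum := hasSum_qP_mul_pow_div_qP hq ha (neg_ne_zero.2 one_ne_zero) hqN
  have hP : qP (-1) q N ≠ 0 := qP_ne_zero N ha
  have hqN' : 1 - q ^ N ≠ 0 := sub_ne_zero.2 hqN.symm
  rw [fine, div_mul_cancel₀ _ hq0, show -(q ^ N) * q = -1 * q ^ (N + 1) by ring, hsum.tsum_eq,
    qP_succ]
  field_simp
  ring
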